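/- arXiv:2512.22458 — 2 statements merged into one kernel-verified Lean document; each statement's English description precedes it below -/
import Mathlib

section
/- For any ξ ∈ ℍⁿ, λ > 0 and β ∈ ℝ, the generalized CR inversion Φ_{ξ,λ}^β is an involution: (Φ_{ξ,λ}^β ∘ Φ_{ξ,λ}^β)(ζ) = ζ for all ζ ∈ ℍⁿ ∖ {ξ}. -/
open Complex Filter Topology MeasureTheory

noncomputable section

/-- The Heisenberg group ℍⁿ as ℂⁿ × ℝ. -/
abbrev Heis (n : ℕ) := (Fin n → ℂ) × ℝ

namespace Heis

variable {n : ℕ}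

/-- Hermitian inner product ⟨z,z'⟩ = Σ_j z_j conj(z'_j). -/
def hermInner (z w : Fin n → ℂ) : ℂ := ∑ j, z j * (starRingEnd ℂ) (w j)

/-- Squared Euclidean norm |z|² = Σ_j |z_j|². -/
def nsq (z : Fin n → ℂ) : ℝ := ∑ j, Complex.normSq (z j)

/-- Group law (z,t)·(z',t') = (z+z', t+t'+2 Im⟨z,z'⟩). -/
def hmul (a b : Heis n) : Heis n :=
  (a.1 + b.1, a.2 + b.2 + 2 * (hermInner a.1 b.1).im)

/-- Group inverse: ζ⁻¹ = −ζ. -/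
def hinv (a : Heis n) : Heis n := (-a.1, -a.2)

/-- Korányi norm |(z,t)|_H = (|z|⁴ + t²)^{1/4}. -/
def korNorm (a : Heis n) : ℝ := ((nsq a.1) ^ 2 + a.2 ^ 2) ^ ((1 : ℝ)/4)

/-- Korányi distance d_H(ξ,ζ) = |ζ⁻¹·ξ|_H. -/
def dH (a b : Heis n) : ℝ := korNorm (hmul (hinv b) a)

/-- Open Korányi ball B_λ(ξ). -/
def ball (ξ : Heis n) (lam : ℝ) : Set (Heis n) := {ζ | dH ξ ζ < lam}

/-- Left translation τ_ξ. -/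
def tau (ξ ζ : Heis n) : Heis n := hmul ξ ζ

/-- Dilation δ_λ(z,t) = (λz, λ²t). -/
def dil (lam : ℝ) (a : Heis n) : Heis n := (fun j => (lam : ℂ) * a.1 j, lam ^ 2 * a.2)

/-- Rotation ρ_M(z,t) = (Mz,t). -/
def rot (M : Matrix (Fin n) (Fin n) ℂ) (a : Heis n) : Heis n := (M.mulVec a.1, a.2)

/-- Inversion ι(z,t) = (conj z, −t). -/
def iota (a : Heis n) : Heis n := (fun j => (starRingEnd ℂ) (a.1 j), -a.2)

/-- w = t + i|z|². -/
def wC (a : Heis n) : ℂ := (a.2 : ℂ) + Complex.I * ((nsq a.1 : ℝ) : ℂ)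

/-- CR inversion 𝒥(z,t) = (z/w, −t/|w|²). -/
def crInv (a : Heis n) : Heis n :=
  (fun j => a.1 j / wC a, -a.2 / Complex.normSq (wC a))

/-- Angles θ_k for the rotation matrix M_{ξ,β}. -/
def theta (ξ : Heis n) (β : ℝ) (k : Fin n) : ℝ :=
  if ξ.1 k ≠ 0 then 2 * (ξ.1 k).arg + (wC ξ + Complex.I * (β : ℂ)).arg else 0

/-- The unitary diagonal matrix M_{ξ,β} = diag(e^{iθ₁},…,e^{iθₙ}). -/
def Mmat (ξ : Heis n) (β : ℝ) : Matrix (Fin n) (Fin n) ℂ :=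
  Matrix.diagonal fun k => Complex.exp (Complex.I * ((theta ξ β k : ℝ) : ℂ))

/-- Generalized CR inversion Φ_{ξ,λ}^β = τ_ξ ∘ ρ_{M_{ξ,β}} ∘ δ_{λ²} ∘ 𝒥 ∘ ι ∘ τ_ξ⁻¹. -/
def Phi (ξ : Heis n) (lam β : ℝ) (ζ : Heis n) : Heis n :=
  tau ξ (rot (Mmat ξ β) (dil (lam ^ 2) (crInv (iota (hmul (hinv ξ) ζ)))))

/-- Direction of the vector field X_j at p. -/
def XVec (j : Fin n) (p : Heis n) : Heis n := (Pi.single j (1 : ℂ), 2 * (p.1 j).im)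

/-- Direction of the vector field Y_j at p. -/
def YVec (j : Fin n) (p : Heis n) : Heis n := (Pi.single j Complex.I, -2 * (p.1 j).re)

/-- The vector field X_j acting on functions. -/
def Xop (j : Fin n) (u : Heis n → ℝ) (p : Heis n) : ℝ := fderiv ℝ u p (XVec j p)

/-- The vector field Y_j acting on functions. -/
def Yop (j : Fin n) (u : Heis n → ℝ) (p : Heis n) : ℝ := fderiv ℝ u p (YVec j p)

/-- Sub-Laplacian Δ_H = Σ_j (X_j² + Y_j²). -/
def subLap (u : Heis n → ℝ) (p : Heis n) : ℝ :=
  ∑ j, (Xop j (Xop j u) p + Yop j (Yop j u) p)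

/-- Squared length of the horizontal gradient |∇_H u|² = Σ_j ((X_j u)² + (Y_j u)²). -/
def gradHSq (u : Heis n → ℝ) (p : Heis n) : ℝ :=
  ∑ j, ((Xop j u p) ^ 2 + (Yop j u p) ^ 2)

/-- Generalized Kelvin transform u_{ξ,λ}^β(η) = (λ/d_H(η,ξ))^{Q−2} u(Φ_{ξ,λ}^β(η)), Q−2 = 2n. -/
def kelvin (u : Heis n → ℝ) (ξ : Heis n) (lam β : ℝ) (η : Heis n) : ℝ :=
  (lam / dH η ξ) ^ (2 * n) * u (Phi ξ lam β η)

/-- The filter |ζ|_H → ∞ on ℍⁿ. -/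
def atInftyH (n : ℕ) : Filter (Heis n) := Filter.comap korNorm Filter.atTop

end Heis

/-!
Write `K = 𝒥 ∘ ι`, so that `Φ = τ_ξ ∘ ρ_M ∘ δ_{λ²} ∘ K ∘ τ_ξ⁻¹`. In terms of `w = t + i|z|²`,
`K(z,t) = (-conj(z/w), t/|w|²)`, and the `w` of `K(z,t)` is `1/conj w`; from this `K ∘ K = id`.
Moreover `K ∘ δ_μ = δ_{1/μ} ∘ K`, and, for a diagonal `M` with unimodular entries,
`K ∘ ρ_M = ρ_{conj M} ∘ K`. Pushing the second `K` through `ρ_M ∘ δ_{λ²}` therefore cancels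
the first `ρ_M ∘ δ_{λ²}`, and the two translations cancel as well.
-/

namespace Heis

open ComplexConjugate Matrix

variable {n : ℕ}

theorem hinv_hmul_cancel_left (ξ a : Heis n) : hmul (hinv ξ) (hmul ξ a) = a := by
  have him : (hermInner (-ξ.1) (ξ.1 + a.1)).im = -(hermInner ξ.1 a.1).im := by
    simp [hermInner, mul_add, Finset.sum_add_distrib, Complex.im_sum, Complex.mul_conj]
  refine Prod.ext (neg_add_cancel_left ξ.1 a.1) ?_
  simp only [hmul, hinv, him]
  ring

theorem hmul_hinv_cancel_left (ξ a : Heis n) : hmul ξ (hmul (hinv ξ) a) = a := by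
  simpa [hinv] using hinv_hmul_cancel_left (hinv ξ) a

theorem nsq_eq_zero_iff {z : Fin n → ℂ} : nsq z = 0 ↔ z = 0 := by
  simp [nsq, Finset.sum_eq_zero_iff_of_nonneg, Complex.normSq_nonneg, funext_iff]

theorem wC_eq_zero_iff {a : Heis n} : wC a = 0 ↔ a = 0 := by
  simp [wC, Complex.ext_iff, Prod.ext_iff, nsq_eq_zero_iff, and_comm]

theorem crInv_iota_eq (a : Heis n) :
    crInv (iota a) = (fun j => -conj (a.1 j / wC a), a.2 / normSq (wC a)) := by
  have hw : wC (iota a) = -conj (wC a) := by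
    simp [wC, iota, nsq, Complex.normSq_conj, Complex.ext_iff]
  rw [crInv, hw]
  simp [iota, div_neg]

theorem wC_crInv_iota (a : Heis n) : wC (crInv (iota a)) = (conj (wC a))⁻¹ := by
  have hnsq : nsq (crInv (iota a)).1 = nsq a.1 / normSq (wC a) := by
    simp [crInv_iota_eq, nsq, Finset.sum_div]
  have hw : wC a = a.2 + I * nsq a.1 := rfl
  rw [wC, hnsq, crInv_iota_eq, Complex.inv_def, Complex.conj_conj, Complex.normSq_conj]
  push_cast
  rw [hw]
  ring

theorem crInv_iota_crInv_iota (a : Heis n) : crInv (iota (crInv (iota a))) = a := by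
  by_cases ha : a = 0
  · subst ha
    ext <;> simp [crInv_iota_eq, wC, nsq]
  have hw : wC a ≠ 0 := wC_eq_zero_iff.not.mpr ha
  have hw' : normSq (wC a) ≠ 0 := Complex.normSq_eq_zero.not.mpr hw
  rw [crInv_iota_eq (crInv (iota a)), wC_crInv_iota, crInv_iota_eq]
  refine Prod.ext (funext fun j => ?_) ?_
  · simp only [map_neg, map_div₀, map_inv₀, Complex.conj_conj]
    field_simp
  · simp only [Complex.normSq_inv, Complex.normSq_conj]
    field_simp

theorem crInv_iota_dil (μ : ℝ) (a : Heis n) :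
    crInv (iota (dil μ a)) = dil μ⁻¹ (crInv (iota a)) := by
  rcases eq_or_ne μ 0 with rfl | hμ
  · ext <;> simp [crInv_iota_eq, dil, wC, nsq]
  have hw : wC (dil μ a) = (μ : ℂ) ^ 2 * wC a := by
    simp only [wC, dil, nsq, Complex.normSq_mul, Complex.normSq_ofReal, ← Finset.mul_sum]
    push_cast
    ring
  rw [crInv_iota_eq, hw, crInv_iota_eq]
  ext j
  · simp only [dil, map_div₀, map_mul, map_pow, Complex.conj_ofReal]
    push_cast
    field_simp
  · simp only [dil, map_mul, map_pow, Complex.normSq_ofReal]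
    field_simp

theorem rot_diagonal_eq (u : Fin n → ℂ) (a : Heis n) :
    rot (diagonal u) a = (u * a.1, a.2) :=
  Prod.ext (funext fun j => mulVec_diagonal u a.1 j) rfl

theorem crInv_iota_rot_diagonal {u : Fin n → ℂ} (hu : ∀ k, ‖u k‖ = 1) (a : Heis n) :
    crInv (iota (rot (diagonal u) a)) = rot (diagonal (star u)) (crInv (iota a)) := by
  have hnsq : nsq (u * a.1) = nsq a.1 := by
    simp [nsq, Complex.normSq_eq_norm_sq, hu]
  have hw : wC (rot (diagonal u) a) = wC a := by
    rw [rot_diagonal_eq, wC, hnsq, wC]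
  rw [crInv_iota_eq, hw, rot_diagonal_eq, crInv_iota_eq, rot_diagonal_eq]
  ext j <;> simp [mul_div_assoc]

theorem rot_diagonal_rot_diagonal_star {u : Fin n → ℂ} (hu : ∀ k, ‖u k‖ = 1) (a : Heis n) :
    rot (diagonal u) (rot (diagonal (star u)) a) = a := by
  have huu : ∀ k, u k * conj (u k) = 1 := fun k => by
    rw [Complex.mul_conj, Complex.normSq_eq_norm_sq, hu]
    norm_num
  ext j <;> simp [rot_diagonal_eq, ← mul_assoc, huu]

theorem dil_rot (μ : ℝ) (M : Matrix (Fin n) (Fin n) ℂ) (a : Heis n) :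
    dil μ (rot M a) = rot M (dil μ a) := by
  refine Prod.ext (funext fun j => ?_) rfl
  simp [dil, rot, mulVec, dotProduct, Finset.mul_sum, mul_left_comm]

theorem dil_dil_inv {μ : ℝ} (hμ : μ ≠ 0) (a : Heis n) : dil μ (dil μ⁻¹ a) = a := by
  ext j <;> simp [dil, hμ]

theorem rot_dil_crInv_iota_involutive {u : Fin n → ℂ} (hu : ∀ k, ‖u k‖ = 1) {μ : ℝ}
    (hμ : μ ≠ 0) (a : Heis n) :
    rot (diagonal u) (dil μ (crInv (iota (rot (diagonal u) (dil μ (crInv (iota a))))))) = a := by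
  rw [crInv_iota_rot_diagonal hu, crInv_iota_dil, crInv_iota_crInv_iota, dil_rot, dil_dil_inv hμ,
    rot_diagonal_rot_diagonal_star hu]

end Heis

open Heis
/-- the generalized CR inversion Φ_{ξ,λ}^β is an involution. -/
theorem phi_involution (n : ℕ) (ξ : Heis n) (lam : ℝ) (hlam : 0 < lam) (β : ℝ) :
    ∀ ζ : Heis n, ζ ≠ ξ → Phi ξ lam β (Phi ξ lam β ζ) = ζ := by
  intro ζ _
  simp only [Phi, tau, hinv_hmul_cancel_left]
  rw [Mmat, rot_dil_crInv_iota_involutive (fun k => Complex.norm_exp_I_mul_ofReal _)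
    (pow_ne_zero 2 hlam.ne'), hmul_hinv_cancel_left]
end
end

section
/- Let n ≥ 1 and β, ν ∈ ℝ. Suppose f : ℍⁿ → ℝ is continuous and for every ξ ∈ ℍⁿ there exists λ(ξ) > 0 such that (λ(ξ)/d_H(ξ,ζ))^ν · f(Φ_{ξ,λ(ξ)}^β(ζ)) = f(ζ) for all ζ ∈ ℍⁿ ∖ {ξ}. Then the limit α := lim_{|ζ|_H→∞} |ζ|_H^ν f(ζ) exists, and λ(ξ)^ν f(ξ) = α for every ξ ∈ ℍⁿ. -/
open Complex Filter Topology MeasureTheory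

noncomputable section

/-! The Korányi norm satisfies the triangle inequality |ab|_H ≤ |a|_H + |b|_H (Cauchy–Schwarz on
the cross term of w(ab)), so d_H(ξ,ζ) = |ξ⁻¹ζ|_H differs from |ζ|_H by at most |ξ|_H and
|ζ|_H / d_H(ξ,ζ) → 1 as |ζ|_H → ∞. The CR inversion 𝒥 sends the point at infinity to 0, hence
Φ_{ξ,λ}^β(ζ) → ξ. Writing |ζ|_H^ν f(ζ) = (λ |ζ|_H / d_H(ξ,ζ))^ν f(Φ_{ξ,λ}^β(ζ)) by the
invariance, the limit exists and equals λ(ξ)^ν f(ξ) for every ξ; uniqueness of limits makes it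
independent of ξ. -/

lemma tendsto_div_nhds_one_of_abs_sub_le {α : Type*} {l : Filter α} {u v : α → ℝ} {C : ℝ}
    (hv : Tendsto v l atTop) (huv : ∀ x, |u x - v x| ≤ C) :
    Tendsto (fun x => u x / v x) l (𝓝 1) := by
  have hequiv : Asymptotics.IsEquivalent l u v :=
    (Asymptotics.IsBigO.of_bound (g := fun _ => (1 : ℝ)) C
      (Eventually.of_forall fun x => by simpa using huv x)).trans_isLittleO
      ((Asymptotics.isLittleO_one_left_iff ℝ).2 (tendsto_abs_atTop_atTop.comp hv))
  exact (Asymptotics.isEquivalent_iff_tendsto_one (hv.eventually_ne_atTop 0)).1 hequiv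

namespace Heis

variable {n : ℕ}

local notation "ℓ²" z => (WithLp.toLp 2 z : EuclideanSpace ℂ (Fin _))

-- `inner` is conjugate-linear in its first argument, `hermInner` in its second.
lemma hermInner_eq_inner (z w : Fin n → ℂ) : hermInner z w = inner ℂ (ℓ² w) (ℓ² z) := rfl

lemma hermInner_neg_left (z w : Fin n → ℂ) : hermInner (-z) w = -hermInner z w := by
  simp [hermInner_eq_inner, inner_neg_right]

lemma hermInner_neg_right (z w : Fin n → ℂ) : hermInner z (-w) = -hermInner z w := by
  simp [hermInner_eq_inner, inner_neg_left]

lemma hermInner_add_right (z w v : Fin n → ℂ) :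
    hermInner z (w + v) = hermInner z w + hermInner z v := by
  simp [hermInner_eq_inner]

lemma im_hermInner_comm (z w : Fin n → ℂ) : (hermInner w z).im = -(hermInner z w).im := by
  rw [hermInner_eq_inner, hermInner_eq_inner, ← inner_conj_symm, Complex.conj_im]

lemma im_hermInner_self (z : Fin n → ℂ) : (hermInner z z).im = 0 := by
  linarith [im_hermInner_comm z z]

lemma nsq_eq_norm_sq (z : Fin n → ℂ) : nsq z = ‖ℓ² z‖ ^ 2 := by
  simp [nsq, EuclideanSpace.norm_sq_eq, Complex.normSq_eq_norm_sq]

lemma nsq_add (z w : Fin n → ℂ) :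
    nsq (z + w) = nsq z + nsq w + 2 * (hermInner z w).re := by
  rw [nsq_eq_norm_sq, nsq_eq_norm_sq, nsq_eq_norm_sq, hermInner_eq_inner, WithLp.toLp_add,
    norm_add_sq (𝕜 := ℂ), inner_re_symm, RCLike.re_to_complex]
  ring

lemma hinv_hinv (a : Heis n) : hinv (hinv a) = a := by
  simp [hinv]

lemma hinv_hmul (a b : Heis n) : hinv (hmul a b) = hmul (hinv b) (hinv a) := by
  ext
  · simp [hinv, hmul, add_comm]
  · simp only [hinv, hmul, hermInner_neg_left, hermInner_neg_right, neg_neg,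
      im_hermInner_comm a.1 b.1]
    ring

lemma hmul_hinv_hmul (a b : Heis n) : hmul (hinv a) (hmul a b) = b := by
  ext
  · simp [hinv, hmul]
  · simp only [hinv, hmul, hermInner_neg_left, hermInner_add_right, Complex.neg_im,
      Complex.add_im, im_hermInner_self]
    ring

lemma wC_hmul (a b : Heis n) :
    wC (hmul a b) = wC a + wC b + 2 * I * (starRingEnd ℂ) (hermInner a.1 b.1) := by
  apply Complex.ext <;> simp [wC, hmul, nsq_add]

lemma normSq_wC (a : Heis n) : normSq (wC a) = nsq a.1 ^ 2 + a.2 ^ 2 := by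
  simp [normSq_apply, wC]
  ring

lemma korNorm_nonneg (a : Heis n) : 0 ≤ korNorm a := by
  unfold korNorm
  positivity

lemma korNorm_sq (a : Heis n) : korNorm a ^ 2 = ‖wC a‖ := by
  rw [Complex.norm_def, normSq_wC, korNorm, ← Real.rpow_natCast, ← Real.rpow_mul (by positivity),
    Real.sqrt_eq_rpow]
  norm_num

lemma korNorm_hinv (a : Heis n) : korNorm (hinv a) = korNorm a := by
  simp [korNorm, hinv, nsq]

lemma korNorm_iota (a : Heis n) : korNorm (iota a) = korNorm a := by
  simp [korNorm, iota, nsq, Complex.normSq_conj]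

lemma dH_eq_korNorm_hmul (ξ ζ : Heis n) : dH ξ ζ = korNorm (hmul (hinv ξ) ζ) := by
  rw [dH, ← korNorm_hinv, hinv_hmul, hinv_hinv]

lemma norm_toLp_fst_le_korNorm (a : Heis n) : ‖ℓ² a.1‖ ≤ korNorm a := by
  have h : ‖ℓ² a.1‖ ^ 2 ≤ korNorm a ^ 2 := by
    rw [← nsq_eq_norm_sq, korNorm_sq]
    simpa [wC] using Complex.im_le_norm (wC a)
  exact (pow_le_pow_iff_left₀ (norm_nonneg _) (korNorm_nonneg a) two_ne_zero).1 h

lemma norm_fst_le_korNorm (a : Heis n) (j : Fin n) : ‖a.1 j‖ ≤ korNorm a :=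
  (PiLp.norm_apply_le (ℓ² a.1) j).trans (norm_toLp_fst_le_korNorm a)

lemma abs_snd_le_korNorm_sq (a : Heis n) : |a.2| ≤ korNorm a ^ 2 := by
  rw [korNorm_sq]
  simpa [wC] using Complex.abs_re_le_norm (wC a)

lemma korNorm_hmul_le (a b : Heis n) : korNorm (hmul a b) ≤ korNorm a + korNorm b := by
  have hinner : ‖hermInner a.1 b.1‖ ≤ korNorm a * korNorm b := by
    rw [hermInner_eq_inner, mul_comm]
    exact (norm_inner_le_norm _ _).trans (mul_le_mul (norm_toLp_fst_le_korNorm b)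
      (norm_toLp_fst_le_korNorm a) (norm_nonneg _) (korNorm_nonneg b))
  have hsq : korNorm (hmul a b) ^ 2 ≤ (korNorm a + korNorm b) ^ 2 :=
    calc korNorm (hmul a b) ^ 2
        = ‖wC a + wC b + 2 * I * (starRingEnd ℂ) (hermInner a.1 b.1)‖ := by
          rw [korNorm_sq, wC_hmul]
      _ ≤ ‖wC a‖ + ‖wC b‖ + 2 * ‖hermInner a.1 b.1‖ := by
          refine (norm_add₃_le ..).trans_eq ?_
          simp
      _ ≤ (korNorm a + korNorm b) ^ 2 := by
          rw [← korNorm_sq, ← korNorm_sq]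
          nlinarith
  exact (pow_le_pow_iff_left₀ (korNorm_nonneg _)
    (add_nonneg (korNorm_nonneg a) (korNorm_nonneg b)) two_ne_zero).1 hsq

lemma abs_korNorm_hmul_sub_le (a b : Heis n) : |korNorm (hmul a b) - korNorm b| ≤ korNorm a := by
  have h := korNorm_hmul_le (hinv a) (hmul a b)
  rw [hmul_hinv_hmul, korNorm_hinv] at h
  rw [abs_sub_le_iff]
  constructor <;> linarith [korNorm_hmul_le a b]

lemma norm_crInv_fst_le (a : Heis n) (j : Fin n) : ‖(crInv a).1 j‖ ≤ (korNorm a)⁻¹ :=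
  calc ‖(crInv a).1 j‖ = ‖a.1 j‖ / korNorm a ^ 2 := by simp [crInv, korNorm_sq]
    _ ≤ korNorm a / korNorm a ^ 2 := by gcongr; exact norm_fst_le_korNorm a j
    _ = (korNorm a)⁻¹ := by rw [sq, div_self_mul_self']

lemma abs_crInv_snd_le (a : Heis n) : |(crInv a).2| ≤ (korNorm a ^ 2)⁻¹ :=
  calc |(crInv a).2| = |a.2| / (korNorm a ^ 2) ^ 2 := by
        simp [crInv, abs_div, ← Complex.sq_norm, korNorm_sq]
    _ ≤ korNorm a ^ 2 / (korNorm a ^ 2) ^ 2 := by gcongr; exact abs_snd_le_korNorm_sq a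
    _ = (korNorm a ^ 2)⁻¹ := by rw [sq (korNorm a ^ 2), div_self_mul_self']

lemma continuous_hmul_left (a : Heis n) : Continuous (hmul a) := by
  unfold hmul hermInner
  fun_prop

lemma continuous_rot (M : Matrix (Fin n) (Fin n) ℂ) : Continuous (rot M : Heis n → Heis n) := by
  unfold rot
  fun_prop

lemma continuous_dil (c : ℝ) : Continuous (dil c : Heis n → Heis n) := by
  unfold dil
  fun_prop

lemma tendsto_korNorm_atInftyH : Tendsto korNorm (atInftyH n) atTop :=
  tendsto_comap

lemma korNorm_zero_sq (r : ℝ) (hr : 0 ≤ r) : korNorm ((0, r ^ 2) : Heis n) = r := by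
  have hnsq : nsq (0 : Fin n → ℂ) = 0 := by simp [nsq]
  rw [korNorm, hnsq, show (0 : ℝ) ^ 2 + (r ^ 2) ^ 2 = r ^ (4 : ℝ) by norm_cast; ring,
    ← Real.rpow_mul hr]
  norm_num

instance atInftyH_neBot : (atInftyH n).NeBot :=
  atTop_neBot.comap_of_range_mem <|
    mem_atTop_sets.2 ⟨0, fun r hr => ⟨(0, r ^ 2), korNorm_zero_sq r hr⟩⟩

lemma tendsto_hmul_atInftyH (a : Heis n) : Tendsto (hmul a) (atInftyH n) (atInftyH n) := by
  refine tendsto_comap_iff.2 <| tendsto_atTop_mono (fun ζ => ?_)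
    (tendsto_atTop_add_const_right _ (-korNorm a) tendsto_korNorm_atInftyH)
  dsimp only [Function.comp_apply]
  linarith [(abs_le.1 (abs_korNorm_hmul_sub_le a ζ)).1]

lemma tendsto_iota_atInftyH : Tendsto iota (atInftyH n) (atInftyH n) := by
  refine tendsto_comap_iff.2 ?_
  simpa [Function.comp_def, korNorm_iota] using tendsto_korNorm_atInftyH (n := n)

lemma tendsto_crInv_atInftyH : Tendsto crInv (atInftyH n) (𝓝 0) := by
  have hK := tendsto_korNorm_atInftyH (n := n)
  refine Tendsto.prodMk_nhds (tendsto_pi_nhds.2 fun j => ?_) ?_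
  · exact squeeze_zero_norm (fun a => norm_crInv_fst_le a j) hK.inv_tendsto_atTop
  · exact squeeze_zero_norm (fun a => abs_crInv_snd_le a)
      ((tendsto_pow_atTop two_ne_zero).comp hK).inv_tendsto_atTop

lemma tendsto_Phi_atInftyH (ξ : Heis n) (lam β : ℝ) :
    Tendsto (Phi ξ lam β) (atInftyH n) (𝓝 ξ) := by
  have h0 : tau ξ (rot (Mmat ξ β) (dil (lam ^ 2) 0)) = ξ := by
    ext <;> simp [tau, rot, dil, hmul, hermInner, Matrix.mulVec, dotProduct]
  have hout := ((continuous_hmul_left ξ).comp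
    ((continuous_rot (Mmat ξ β)).comp (continuous_dil (lam ^ 2)))).tendsto' 0 ξ h0
  exact hout.comp <|
    tendsto_crInv_atInftyH.comp (tendsto_iota_atInftyH.comp (tendsto_hmul_atInftyH _))

lemma tendsto_korNorm_div_dH (ξ : Heis n) :
    Tendsto (fun ζ => korNorm ζ / dH ξ ζ) (atInftyH n) (𝓝 1) := by
  simp_rw [dH_eq_korNorm_hmul]
  refine tendsto_div_nhds_one_of_abs_sub_le (C := korNorm ξ)
    (tendsto_korNorm_atInftyH.comp (tendsto_hmul_atInftyH _)) fun ζ => ?_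
  rw [abs_sub_comm, ← korNorm_hinv ξ]
  exact abs_korNorm_hmul_sub_le _ ζ

theorem tendsto_korNorm_rpow_mul_of_invariant {f : Heis n → ℝ} {ξ : Heis n}
    {lam β ν : ℝ} (hf : ContinuousAt f ξ) (hlam : 0 < lam)
    (hinvariant : ∀ ζ, ζ ≠ ξ → (lam / dH ξ ζ) ^ ν * f (Phi ξ lam β ζ) = f ζ) :
    Tendsto (fun ζ => korNorm ζ ^ ν * f ζ) (atInftyH n) (𝓝 (lam ^ ν * f ξ)) := by
  have hlim : Tendsto (fun ζ => (lam * (korNorm ζ / dH ξ ζ)) ^ ν * f (Phi ξ lam β ζ))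
      (atInftyH n) (𝓝 (lam ^ ν * f ξ)) := by
    have hpow := ((tendsto_korNorm_div_dH ξ).const_mul lam).rpow_const (p := ν)
      (Or.inl (by simpa using hlam.ne'))
    rw [mul_one] at hpow
    exact hpow.mul (hf.tendsto.comp (tendsto_Phi_atInftyH ξ lam β))
  refine hlim.congr' ?_
  filter_upwards [tendsto_korNorm_atInftyH.eventually_gt_atTop (korNorm ξ)] with ζ hζ
  have hdH : 0 ≤ dH ξ ζ := korNorm_nonneg _
  rw [← hinvariant ζ (by rintro rfl; exact lt_irrefl _ hζ), ← mul_assoc,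
    ← Real.mul_rpow (korNorm_nonneg ζ) (div_nonneg hlam.le hdH), mul_div_left_comm]

end Heis

open Heis

theorem limit_exists_and_lambda_identity_general (n : ℕ) (β ν : ℝ)
    (f : Heis n → ℝ) (hcont : Continuous f)
    (lam : Heis n → ℝ) (hlam : ∀ ξ, 0 < lam ξ)
    (hsym : ∀ ξ : Heis n, ∀ ζ : Heis n, ζ ≠ ξ →
      (lam ξ / dH ξ ζ) ^ ν * f (Phi ξ (lam ξ) β ζ) = f ζ) :
    ∃ α : ℝ, Tendsto (fun ζ => korNorm ζ ^ ν * f ζ) (atInftyH n) (nhds α) ∧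
      ∀ ξ : Heis n, lam ξ ^ ν * f ξ = α := by
  have key := fun ξ =>
    tendsto_korNorm_rpow_mul_of_invariant hcont.continuousAt (hlam ξ) (hsym ξ)
  exact ⟨_, key 0, fun ξ => tendsto_nhds_unique (key ξ) (key 0)⟩

/-- the limit α = lim_{|ζ|_H→∞} |ζ|_H^ν f(ζ) exists and
λ(ξ)^ν f(ξ) = α for all ξ. -/
theorem limit_exists_and_lambda_identity (n : ℕ) (hn : 1 ≤ n) (β ν : ℝ)
    (f : Heis n → ℝ) (hcont : Continuous f)
    (lam : Heis n → ℝ) (hlam : ∀ ξ, 0 < lam ξ)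
    (hsym : ∀ ξ : Heis n, ∀ ζ : Heis n, ζ ≠ ξ →
      (lam ξ / dH ξ ζ) ^ ν * f (Phi ξ (lam ξ) β ζ) = f ζ) :
    ∃ α : ℝ, Tendsto (fun ζ => korNorm ζ ^ ν * f ζ) (atInftyH n) (nhds α) ∧
      ∀ ξ : Heis n, lam ξ ^ ν * f ξ = α :=
  limit_exists_and_lambda_identity_general n β ν f hcont lam hlam hsym
end
end
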